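/- Let C = {C_1,…,C_k} be a clustering of a finite set X ⊆ ℝ^m with centers μ_i = (1/|C_i|)·Σ_{x∈C_i} x and radii r(C_i) = max_{x∈C_i} d(x, μ_i), satisfying the γ-margin property with γ ≥ 1, and let ν ≥ 1. If x* ∈ C_i satisfies d(x*, μ_i) < (γ−ν+1)·r(C_i), then for every j ≠ i and every y ∈ C_j one has d(x*, y) > (ν−1)·min{d(x*, μ_i), d(y, μ_j)}. In particular, the cross-cluster confusion condition (a) of a (ν,ρ) local distance-weak oracle never holds for the pair (x*, y). -/

import Mathlib

/-!
The margin property applied to a point of `C_i` realising the radius puts every `y ∉ C_i` at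
distance more than `γ · r(C_i)` from `μ_i`. The triangle inequality through `x*` then gives
`d(x*, y) > γ · r(C_i) - d(x*, μ_i) > (ν - 1) · r(C_i) ≥ (ν - 1) · d(x*, μ_i)`.
-/

open Finset
open scoped Classical

/-- The center (mean) of a finite cluster of points in Euclidean space. -/
noncomputable def ctr {m : ℕ} (C : Finset (EuclideanSpace ℝ (Fin m))) : EuclideanSpace ℝ (Fin m) :=
  (C.card : ℝ)⁻¹ • ∑ x ∈ C, x

/-- The radius of a cluster: the maximal distance of a member to the center. -/
noncomputable def rad {m : ℕ} (C : Finset (EuclideanSpace ℝ (Fin m))) : ℝ :=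
  sSup ((fun x => dist x (ctr C)) '' (C : Set (EuclideanSpace ℝ (Fin m))))

/-- Confusion predicate for the (ν, ρ) local distance-weak oracle. -/
def LocalConfused {m k : ℕ} (Cl : Fin k → Finset (EuclideanSpace ℝ (Fin m))) (ν ρ : ℝ)
    (x y : EuclideanSpace ℝ (Fin m)) : Prop :=
  (∃ i j, i ≠ j ∧ x ∈ Cl i ∧ y ∈ Cl j ∧
    dist x y < (ν - 1) * min (dist x (ctr (Cl i))) (dist y (ctr (Cl j)))) ∨
  (∃ i, x ∈ Cl i ∧ y ∈ Cl i ∧ 2 * ρ * rad (Cl i) < dist x y)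

/-- Confusion predicate for the ρ global distance-weak oracle. -/
def GlobalConfused {m k : ℕ} (Cl : Fin k → Finset (EuclideanSpace ℝ (Fin m))) (ρ : ℝ)
    (x y : EuclideanSpace ℝ (Fin m)) : Prop :=
  (∃ i j, i ≠ j ∧ x ∈ Cl i ∧ y ∈ Cl j ∧
    (ρ * rad (Cl i) < dist x (ctr (Cl i)) ∨ ρ * rad (Cl j) < dist y (ctr (Cl j)))) ∨
  (∃ i, x ∈ Cl i ∧ y ∈ Cl i ∧ 2 * ρ * rad (Cl i) < dist x y)

/-- Two points lie in the same cluster. -/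
def SameCluster {m k : ℕ} (Cl : Fin k → Finset (EuclideanSpace ℝ (Fin m)))
    (x y : EuclideanSpace ℝ (Fin m)) : Prop :=
  ∃ i, x ∈ Cl i ∧ y ∈ Cl i

/-- The truthful (ν, ρ) local distance-weak oracle: answers 0 on confused pairs,
1 on same-cluster non-confused pairs, and -1 on different-cluster non-confused pairs. -/
noncomputable def localQ {m k : ℕ} (Cl : Fin k → Finset (EuclideanSpace ℝ (Fin m))) (ν ρ : ℝ)
    (x y : EuclideanSpace ℝ (Fin m)) : ℤ :=
  if LocalConfused Cl ν ρ x y then 0 else if SameCluster Cl x y then 1 else -1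

/-- The truthful ρ global distance-weak oracle. -/
noncomputable def globalQ {m k : ℕ} (Cl : Fin k → Finset (EuclideanSpace ℝ (Fin m))) (ρ : ℝ)
    (x y : EuclideanSpace ℝ (Fin m)) : ℤ :=
  if GlobalConfused Cl ρ x y then 0 else if SameCluster Cl x y then 1 else -1

theorem sub_one_mul_lt_dist_of_mul_lt_dist {α : Type*} [PseudoMetricSpace α] {x y c : α}
    {γ ν r : ℝ} (hy : γ * r < dist y c) (hx : dist x c < (γ - ν + 1) * r) :
    (ν - 1) * r < dist x y := by
  have := dist_triangle_left y c x
  linarith [show (γ - ν + 1) * r = γ * r - (ν - 1) * r by ring]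

section Cluster

variable {m : ℕ} {C : Finset (EuclideanSpace ℝ (Fin m))}

theorem dist_ctr_le_rad {x : EuclideanSpace ℝ (Fin m)} (hx : x ∈ C) : dist x (ctr C) ≤ rad C :=
  le_csSup (C.finite_toSet.image _).bddAbove ⟨x, hx, rfl⟩

theorem exists_dist_ctr_eq_rad (hC : C.Nonempty) : ∃ z ∈ C, dist z (ctr C) = rad C :=
  (hC.to_set.image _).csSup_mem (C.finite_toSet.image _)

theorem mul_rad_lt_dist_ctr {γ : ℝ} {y : EuclideanSpace ℝ (Fin m)} (hC : C.Nonempty)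
    (hmargin : ∀ x ∈ C, γ * dist x (ctr C) < dist y (ctr C)) : γ * rad C < dist y (ctr C) := by
  obtain ⟨z, hz, hzr⟩ := exists_dist_ctr_eq_rad hC
  simpa only [hzr] using hmargin z hz

end Cluster

theorem stmt1_general {m k : ℕ} (X : Finset (EuclideanSpace ℝ (Fin m)))
    (Cl : Fin k → Finset (EuclideanSpace ℝ (Fin m)))
    (hsub : ∀ i, Cl i ⊆ X)
    (hpart : ∀ x ∈ X, ∃! i, x ∈ Cl i)
    (γ : ℝ)
    (hmargin : ∀ i, ∀ x ∈ Cl i, ∀ y ∈ X, y ∉ Cl i →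
      γ * dist x (ctr (Cl i)) < dist y (ctr (Cl i)))
    (ν : ℝ) (hν : 1 ≤ ν)
    (i : Fin k) (xs : EuclideanSpace ℝ (Fin m)) (hxs : xs ∈ Cl i)
    (hgood : dist xs (ctr (Cl i)) < (γ - ν + 1) * rad (Cl i)) :
    ∀ j, j ≠ i → ∀ y ∈ Cl j,
      (ν - 1) * min (dist xs (ctr (Cl i))) (dist y (ctr (Cl j))) < dist xs y := by
  intro j hji y hy
  have hyX : y ∈ X := hsub j hy
  have hyi : y ∉ Cl i := fun hyi => hji ((hpart y hyX).unique hy hyi)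
  have hfar : γ * rad (Cl i) < dist y (ctr (Cl i)) :=
    mul_rad_lt_dist_ctr ⟨xs, hxs⟩ fun x hx => hmargin i x hx y hyX hyi
  calc (ν - 1) * min (dist xs (ctr (Cl i))) (dist y (ctr (Cl j)))
      ≤ (ν - 1) * rad (Cl i) :=
        mul_le_mul_of_nonneg_left ((min_le_left _ _).trans (dist_ctr_le_rad hxs))
          (sub_nonneg.2 hν)
    _ < dist xs y := sub_one_mul_lt_dist_of_mul_lt_dist hfar hgood

/-- Under the γ-margin property, if x* ∈ C_i satisfies
d(x*, μ_i) < (γ−ν+1)·r(C_i), then for every j ≠ i and every y ∈ C_j,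
d(x*, y) > (ν−1)·min(d(x*,μ_i), d(y,μ_j)); in particular the cross-cluster
confusion condition (a) of a (ν,ρ) local distance-weak oracle never holds for (x*, y). -/
theorem stmt1 {m k : ℕ} (X : Finset (EuclideanSpace ℝ (Fin m)))
    (Cl : Fin k → Finset (EuclideanSpace ℝ (Fin m)))
    (hsub : ∀ i, Cl i ⊆ X) (hne : ∀ i, (Cl i).Nonempty)
    (hpart : ∀ x ∈ X, ∃! i, x ∈ Cl i)
    (γ : ℝ) (hγ : 1 ≤ γ)
    (hmargin : ∀ i, ∀ x ∈ Cl i, ∀ y ∈ X, y ∉ Cl i →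
      γ * dist x (ctr (Cl i)) < dist y (ctr (Cl i)))
    (ν : ℝ) (hν : 1 ≤ ν)
    (i : Fin k) (xs : EuclideanSpace ℝ (Fin m)) (hxs : xs ∈ Cl i)
    (hgood : dist xs (ctr (Cl i)) < (γ - ν + 1) * rad (Cl i)) :
    ∀ j, j ≠ i → ∀ y ∈ Cl j,
      (ν - 1) * min (dist xs (ctr (Cl i))) (dist y (ctr (Cl j))) < dist xs y :=
  stmt1_general X Cl hsub hpart γ hmargin ν hν i xs hxs hgood
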